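/- Let n ≥ 2, let A = (a_{ij}) be a symmetric positive-definite real n×n matrix with inverse (a^{ij}), and let b = (b_i) be a covector with 0 < b² := a^{ij}b_ib_j < 1. Let r be a symmetric bilinear form on ℝⁿ and σ a linear form on ℝⁿ. Suppose there exist a linear form f on ℝⁿ and a constant τ ∈ ℝ such that (β(y) − α(y))·r(y,y) + 4α(y)²·σ(y) = (f(y) − τ·α(y))·((1+2b²)α(y)² − 3β(y)²) for all y ∈ ℝⁿ. Then r(y,y) = τ·((1+2b²)α(y)² − 3β(y)²) for all y, and σ = 0. -/

import Mathlib

open scoped BigOperators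

noncomputable section

/-- `α(y) = √(a_{ij} yⁱ yʲ)`. -/
def alphaOf {n : ℕ} (A : Matrix (Fin n) (Fin n) ℝ) (y : Fin n → ℝ) : ℝ :=
  Real.sqrt (∑ i, ∑ j, A i j * y i * y j)

/-- `β(y) = b_i yⁱ`. -/
def betaOf {n : ℕ} (b : Fin n → ℝ) (y : Fin n → ℝ) : ℝ := ∑ i, b i * y i

/-!
Replacing `y` by `-y` and adding separates the identity into its parts even and odd in `y`
(`α` is even; `β`, `f₀`, `σ₀` are odd). The even part is `α (r₀₀ - τ G) = 0` with
`G = (1 + 2b²)α² - 3β²`, which gives the first claim. The odd part is then the polynomial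
identity `4 α² σ₀ = ℓ₀ G` with `ℓ = f - τ b`. As `α² > 0` away from the origin, `σ₀` vanishes
wherever `ℓ₀` does, so `σ = c ℓ`. If `ℓ ≠ 0`, cancelling `ℓ₀` (by continuity across its zero
set) leaves `(1 + 2b² - 4c) α² = 3β²`; testing this at some `y ≠ 0` with `β(y) = 0`, which
exists as `n ≥ 2`, and then at `y = b` gives `b = 0`, contradicting `b² > 0`.
-/

open Matrix

section

variable {ι R : Type*} [Fintype ι]

theorem sum_mul_eq_dotProduct [Mul R] [AddCommMonoid R] (v w : ι → R) :
    ∑ i, v i * w i = v ⬝ᵥ w := rfl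

theorem sum_sum_mul_mul_eq_dotProduct_mulVec [CommSemiring R] (M : Matrix ι ι R)
    (y : ι → R) : ∑ i, ∑ j, M i j * y i * y j = y ⬝ᵥ M *ᵥ y := by
  simp only [dotProduct, mulVec, Finset.mul_sum]
  exact Finset.sum_congr rfl fun i _ => Finset.sum_congr rfl fun j _ => by ring

theorem exists_eq_smul_of_forall_dotProduct_eq_zero {σ ℓ : ι → ℝ}
    (h : ∀ y, ℓ ⬝ᵥ y = 0 → σ ⬝ᵥ y = 0) : ∃ c : ℝ, σ = c • ℓ := by
  rcases eq_or_ne ℓ 0 with rfl | hℓ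
  · exact ⟨0, by simpa using dotProduct_self_eq_zero.mp (h σ (zero_dotProduct σ))⟩
  have hℓℓ : ℓ ⬝ᵥ ℓ ≠ 0 := mt dotProduct_self_eq_zero.mp hℓ
  set c := (ℓ ⬝ᵥ σ) / (ℓ ⬝ᵥ ℓ)
  -- `σ - c • ℓ` lies in the kernel of `ℓ`, hence of `σ`, so its square vanishes
  have hperp : ℓ ⬝ᵥ (σ - c • ℓ) = 0 := by
    rw [dotProduct_sub, dotProduct_smul, smul_eq_mul, div_mul_cancel₀ _ hℓℓ, sub_self]
  refine ⟨c, sub_eq_zero.mp (dotProduct_self_eq_zero.mp ?_)⟩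
  rw [sub_dotProduct, h _ hperp, smul_dotProduct, hperp, smul_zero, sub_zero]

theorem eq_zero_of_forall_dotProduct_mul_eq_zero {ℓ : ι → ℝ} (hℓ : ℓ ≠ 0) {p : (ι → ℝ) → ℝ}
    (hp : Continuous p) (h : ∀ y, (ℓ ⬝ᵥ y) * p y = 0) (y : ι → ℝ) : p y = 0 := by
  have hℓℓ : ℓ ⬝ᵥ ℓ ≠ 0 := mt dotProduct_self_eq_zero.mp hℓ
  -- On the line `y + t • ℓ`, the factor `ℓ ⬝ᵥ _` vanishes at a single parameter only.
  have hline : (fun t : ℝ => p (y + t • ℓ)) = fun _ => 0 := by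
    refine Continuous.ext_on (dense_compl_singleton (-(ℓ ⬝ᵥ y) / (ℓ ⬝ᵥ ℓ))) (by fun_prop)
      continuous_const fun t ht => ?_
    refine (mul_eq_zero.mp (h (y + t • ℓ))).resolve_left fun h0 => ht ?_
    rw [dotProduct_add, dotProduct_smul, smul_eq_mul] at h0
    rw [Set.mem_singleton_iff, eq_div_iff hℓℓ]
    linarith
  simpa using congrFun hline 0

theorem dotProduct_mulVec_pos_of_posDef {A : Matrix ι ι ℝ} (hA : A.PosDef)
    {y : ι → ℝ} (hy : y ≠ 0) : 0 < y ⬝ᵥ A *ᵥ y := by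
  simpa using hA.dotProduct_mulVec_pos hy

theorem not_forall_mul_dotProduct_mulVec_eq_sq [Nontrivial ι] {A : Matrix ι ι ℝ}
    (hA : A.PosDef) {b : ι → ℝ} (hb : b ≠ 0) (c : ℝ) :
    ¬ ∀ y, c * (y ⬝ᵥ A *ᵥ y) = (b ⬝ᵥ y) ^ 2 := by
  intro h
  obtain ⟨y, hy, hby⟩ := exists_ne_zero_dotProduct_eq_zero b
  have hc : c = 0 := by
    have := h y
    rw [dotProduct_comm b y, hby, zero_pow two_ne_zero] at this
    exact (mul_eq_zero.mp this).resolve_right (dotProduct_mulVec_pos_of_posDef hA hy).ne'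
  have hbb := h b
  rw [hc, zero_mul, eq_comm, pow_eq_zero_iff two_ne_zero] at hbb
  exact hb (dotProduct_self_eq_zero.mp hbb)

theorem eq_zero_of_forall_mul_dotProduct_eq [Nontrivial ι] {A : Matrix ι ι ℝ}
    (hA : A.PosDef) {b : ι → ℝ} (hb : b ≠ 0) (κ : ℝ) {σ ℓ : ι → ℝ}
    (h : ∀ y, 4 * (y ⬝ᵥ A *ᵥ y) * (σ ⬝ᵥ y) =
      (ℓ ⬝ᵥ y) * (κ * (y ⬝ᵥ A *ᵥ y) - 3 * (b ⬝ᵥ y) ^ 2)) :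
    σ = 0 := by
  obtain ⟨c, rfl⟩ : ∃ c : ℝ, σ = c • ℓ := by
    refine exists_eq_smul_of_forall_dotProduct_eq_zero fun y hℓy => ?_
    rcases eq_or_ne y 0 with rfl | hy
    · exact dotProduct_zero σ
    have hQ := dotProduct_mulVec_pos_of_posDef hA hy
    have := h y
    rw [hℓy, zero_mul] at this
    exact (mul_eq_zero.mp this).resolve_left (by positivity)
  rcases eq_or_ne ℓ 0 with rfl | hℓ
  · exact smul_zero c
  exfalso
  simp only [smul_dotProduct, smul_eq_mul] at h
  have hP := eq_zero_of_forall_dotProduct_mul_eq_zero hℓ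
    (p := fun y => (κ - 4 * c) * (y ⬝ᵥ A *ᵥ y) - 3 * (b ⬝ᵥ y) ^ 2) (by fun_prop)
    fun y => by linear_combination -(h y)
  exact not_forall_mul_dotProduct_mulVec_eq_sq hA hb ((κ - 4 * c) / 3)
    fun y => by linear_combination hP y / 3

end

section

variable {n : ℕ}

theorem alphaOf_eq (A : Matrix (Fin n) (Fin n) ℝ) (y : Fin n → ℝ) :
    alphaOf A y = √(y ⬝ᵥ A *ᵥ y) := by
  rw [alphaOf, sum_sum_mul_mul_eq_dotProduct_mulVec]

theorem alphaOf_neg (A : Matrix (Fin n) (Fin n) ℝ) (y : Fin n → ℝ) :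
    alphaOf A (-y) = alphaOf A y := by
  simp only [alphaOf_eq, mulVec_neg, neg_dotProduct, dotProduct_neg, neg_neg]

theorem alphaOf_sq {A : Matrix (Fin n) (Fin n) ℝ} (hA : A.PosDef) (y : Fin n → ℝ) :
    alphaOf A y ^ 2 = y ⬝ᵥ A *ᵥ y := by
  rcases eq_or_ne y 0 with rfl | hy
  · simp [alphaOf_eq]
  · rw [alphaOf_eq, Real.sq_sqrt (dotProduct_mulVec_pos_of_posDef hA hy).le]

theorem alphaOf_pos {A : Matrix (Fin n) (Fin n) ℝ} (hA : A.PosDef) {y : Fin n → ℝ}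
    (hy : y ≠ 0) : 0 < alphaOf A y := by
  rw [alphaOf_eq]
  exact Real.sqrt_pos.mpr (dotProduct_mulVec_pos_of_posDef hA hy)

end

theorem stmt_4_general {n : ℕ} (hn : 2 ≤ n) (A : Matrix (Fin n) (Fin n) ℝ)
    (hpos : A.PosDef) (b : Fin n → ℝ)
    (hb2pos : 0 < ∑ i, ∑ j, A⁻¹ i j * b i * b j)
    (r : Matrix (Fin n) (Fin n) ℝ) (σ : Fin n → ℝ)
    (f : Fin n → ℝ) (τ : ℝ)
    (h : ∀ y : Fin n → ℝ,
      (betaOf b y - alphaOf A y) * (∑ i, ∑ j, r i j * y i * y j)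
        + 4 * (alphaOf A y)^2 * (∑ i, σ i * y i) =
      ((∑ i, f i * y i) - τ * alphaOf A y) *
        ((1 + 2 * ∑ i, ∑ j, A⁻¹ i j * b i * b j) * (alphaOf A y)^2
          - 3 * (betaOf b y)^2)) :
    (∀ y : Fin n → ℝ,
      (∑ i, ∑ j, r i j * y i * y j) =
        τ * ((1 + 2 * ∑ i, ∑ j, A⁻¹ i j * b i * b j) * (alphaOf A y)^2
          - 3 * (betaOf b y)^2)) ∧
    σ = 0 := by
  have hb : b ≠ 0 := by
    rintro rfl
    simp at hb2pos
  set κ := 1 + 2 * ∑ i, ∑ j, A⁻¹ i j * b i * b j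
  simp only [sum_sum_mul_mul_eq_dotProduct_mulVec] at h ⊢
  simp only [betaOf, sum_mul_eq_dotProduct] at h ⊢
  have hr : ∀ y : Fin n → ℝ,
      y ⬝ᵥ r *ᵥ y = τ * (κ * alphaOf A y ^ 2 - 3 * (b ⬝ᵥ y) ^ 2) := by
    intro y
    rcases eq_or_ne y 0 with rfl | hy
    · simp [alphaOf_eq]
    have hneg := h (-y)
    simp only [alphaOf_neg, mulVec_neg, neg_dotProduct, dotProduct_neg, neg_neg] at hneg
    have heven :
        alphaOf A y * (y ⬝ᵥ r *ᵥ y - τ * (κ * alphaOf A y ^ 2 - 3 * (b ⬝ᵥ y) ^ 2)) = 0 := by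
      linear_combination (-1 / 2 : ℝ) * h y - (1 / 2 : ℝ) * hneg
    exact sub_eq_zero.mp ((mul_eq_zero.mp heven).resolve_left (alphaOf_pos hpos hy).ne')
  have : Nontrivial (Fin n) := Fin.nontrivial_iff_two_le.mpr hn
  refine ⟨hr, eq_zero_of_forall_mul_dotProduct_eq hpos hb κ (ℓ := f - τ • b) fun y => ?_⟩
  rw [sub_dotProduct, smul_dotProduct, smul_eq_mul]
  linear_combination h y - (b ⬝ᵥ y - alphaOf A y) * hr y
    - (4 * (σ ⬝ᵥ y) - κ * (f ⬝ᵥ y - τ * (b ⬝ᵥ y))) * alphaOf_sq hpos y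

/-- Lemma 3.2: if `(β − α) r₀₀ + 4 α² σ₀ = (f − τα)((1+2b²)α² − 3β²)` identically in `y`
(the meaning of `(s−1)r₀₀ + 4αs₀ ≡ 0 mod (1+2b²−3s²)`), then
`r₀₀ = τ((1+2b²)α² − 3β²)` and `σ = 0`. -/
theorem stmt_4 {n : ℕ} (hn : 2 ≤ n) (A : Matrix (Fin n) (Fin n) ℝ)
    (hsym : A.IsSymm) (hpos : A.PosDef) (b : Fin n → ℝ)
    (hb2pos : 0 < ∑ i, ∑ j, A⁻¹ i j * b i * b j)
    (hb2lt : (∑ i, ∑ j, A⁻¹ i j * b i * b j) < 1)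
    (r : Matrix (Fin n) (Fin n) ℝ) (hr : r.IsSymm) (σ : Fin n → ℝ)
    (f : Fin n → ℝ) (τ : ℝ)
    (h : ∀ y : Fin n → ℝ,
      (betaOf b y - alphaOf A y) * (∑ i, ∑ j, r i j * y i * y j)
        + 4 * (alphaOf A y)^2 * (∑ i, σ i * y i) =
      ((∑ i, f i * y i) - τ * alphaOf A y) *
        ((1 + 2 * ∑ i, ∑ j, A⁻¹ i j * b i * b j) * (alphaOf A y)^2
          - 3 * (betaOf b y)^2)) :
    (∀ y : Fin n → ℝ,
      (∑ i, ∑ j, r i j * y i * y j) =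
        τ * ((1 + 2 * ∑ i, ∑ j, A⁻¹ i j * b i * b j) * (alphaOf A y)^2
          - 3 * (betaOf b y)^2)) ∧
    σ = 0 :=
  stmt_4_general hn A hpos b hb2pos r σ f τ h
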